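/- arXiv:2011.09543 — 5 statements merged into one kernel-verified Lean document; each statement's English description precedes it below -/
import Mathlib

section
/- Let φ : ℝ → ℝ be even and differentiable on ℝ with |φ'(ξ)| ≤ C₀ (1+ξ²)^{β/2} for all ξ ∈ ℝ, where β < 1 and C₀ > 0, and suppose that φ is twice differentiable on some interval (-ξ₁, ξ₁) around zero (ξ₁ > 0) with φ'' bounded there. Then there exists C > 0 such that for every real ε with 0 < |ε| ≤ 1 and every ξ ∈ ℝ, |φ(εξ) - φ(0)| ≤ C |ε|^{(3-2β)/(2-β)} (1 + ξ²). (Equivalently, the Fourier multiplier J^{-2}(φ(εD) - φ(0)) has operator norm on H^s at most C |ε|^{(3-2β)/(2-β)} for every s.) -/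
open MeasureTheory Filter Topology Set

lemma abs_le_abs_of_mem_uIcc {t x : ℝ} (ht : t ∈ uIcc (0:ℝ) x) : |t| ≤ |x| := by
  rcases le_total 0 x with h | h
  · rw [uIcc_of_le h] at ht
    rw [abs_of_nonneg ht.1, abs_of_nonneg h]; exact ht.2
  · rw [uIcc_of_ge h] at ht
    rw [abs_of_nonpos ht.2, abs_of_nonpos h]; linarith [ht.1]

/-- Symbol estimate behind Lemma 3.3: if `φ` is even, `|φ'(ξ)| ≤ C₀⟨ξ⟩^β` with `β < 1`,
and `φ''` exists and is bounded on `(-ξ₁, ξ₁)`, then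
`|φ(εξ) - φ(0)| ≤ C |ε|^{(3-2β)/(2-β)} (1 + ξ²)` for `0 < |ε| ≤ 1`. -/
theorem multiplier_symbol_approximation (φ : ℝ → ℝ) (β ξ₁ C₀ : ℝ)
    (hβ : β < 1) (hξ₁ : ξ₁ > 0) (hC₀ : C₀ > 0)
    (heven : ∀ ξ : ℝ, φ (-ξ) = φ ξ)
    (hdiff : Differentiable ℝ φ)
    (hder : ∀ ξ : ℝ, |deriv φ ξ| ≤ C₀ * (1 + ξ ^ 2) ^ (β / 2))
    (hdiff2 : ∀ ξ ∈ Ioo (-ξ₁) ξ₁, DifferentiableAt ℝ (deriv φ) ξ)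
    (hbdd2 : ∃ B : ℝ, ∀ ξ ∈ Ioo (-ξ₁) ξ₁, |deriv (deriv φ) ξ| ≤ B) :
    ∃ C > 0, ∀ ε : ℝ, 0 < |ε| → |ε| ≤ 1 → ∀ ξ : ℝ,
      |φ (ε * ξ) - φ 0| ≤ C * |ε| ^ ((3 - 2 * β) / (2 - β)) * (1 + ξ ^ 2) := by
  obtain ⟨B, hB⟩ := hbdd2
  have h0mem : (0 : ℝ) ∈ Ioo (-ξ₁) ξ₁ := ⟨by linarith, hξ₁⟩
  have hBnn : 0 ≤ B := le_trans (abs_nonneg _) (hB 0 h0mem)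
  have h2β : (0:ℝ) < 2 - β := by linarith
  -- the derivative vanishes at 0 (φ is even)
  have hd0 : deriv φ 0 = 0 := by
    have h1 : deriv (fun x : ℝ => φ (-x)) 0 = -deriv φ (-0) := deriv_comp_neg φ 0
    have h2 : (fun x : ℝ => φ (-x)) = φ := funext heven
    rw [h2, neg_zero] at h1
    linarith
  have hprod : 0 < C₀ * (1 + 1 / ξ₁) := by positivity
  set C : ℝ := B + C₀ * (1 + 1 / ξ₁) with hCdef
  have hCpos : 0 < C := by rw [hCdef]; linarith
  have hBC : B ≤ C := by rw [hCdef]; linarith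
  have hC₀C : C₀ * (1 + 1 / ξ₁) ≤ C := by rw [hCdef]; linarith
  -- pointwise quadratic bound
  have key : ∀ x : ℝ, |φ x - φ 0| ≤ C * x ^ 2 := by
    intro x
    rcases lt_or_ge |x| ξ₁ with hx | hx
    · -- small case: use the second derivative bound
      -- |deriv φ t| ≤ B * |x| on the segment
      have hd1 : ∀ t ∈ uIcc (0:ℝ) x, ‖deriv φ t‖ ≤ B * |x| := by
        intro t ht
        have habs : |t| ≤ |x| := abs_le_abs_of_mem_uIcc ht
        have hsub : uIcc (0:ℝ) t ⊆ Ioo (-ξ₁) ξ₁ := by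
          intro u hu
          have hu' : |u| ≤ |t| := abs_le_abs_of_mem_uIcc hu
          constructor
          · linarith [neg_abs_le u]
          · linarith [le_abs_self u]
        have mvt := (convex_uIcc (0:ℝ) t).norm_image_sub_le_of_norm_deriv_le
          (f := deriv φ) (C := B)
          (fun u hu => hdiff2 u (hsub hu))
          (fun u hu => hB u (hsub hu))
          left_mem_uIcc right_mem_uIcc
        rw [hd0, sub_zero, sub_zero] at mvt
        calc ‖deriv φ t‖ ≤ B * ‖t‖ := mvt
          _ ≤ B * |x| := by
            rw [Real.norm_eq_abs]
            exact mul_le_mul_of_nonneg_left habs hBnn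
      have mvt2 := (convex_uIcc (0:ℝ) x).norm_image_sub_le_of_norm_deriv_le
        (f := φ) (C := B * |x|)
        (fun u _ => hdiff u) hd1 left_mem_uIcc right_mem_uIcc
      rw [sub_zero] at mvt2
      calc |φ x - φ 0| ≤ B * |x| * ‖x‖ := mvt2
        _ = B * x ^ 2 := by
          rw [Real.norm_eq_abs, mul_assoc, abs_mul_abs_self]; ring
        _ ≤ C * x ^ 2 := mul_le_mul_of_nonneg_right hBC (sq_nonneg x)
    · -- large case: use the first derivative bound
      have hd1 : ∀ t ∈ uIcc (0:ℝ) x, ‖deriv φ t‖ ≤ C₀ * (1 + |x|) := by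
        intro t ht
        have habs : |t| ≤ |x| := abs_le_abs_of_mem_uIcc ht
        have h1 : (1:ℝ) ≤ 1 + t ^ 2 := by nlinarith [sq_nonneg t]
        have step1 : (1 + t ^ 2) ^ (β / 2) ≤ (1 + t ^ 2) ^ ((1:ℝ) / 2) :=
          Real.rpow_le_rpow_of_exponent_le h1 (by linarith)
        have step2 : (1 + t ^ 2) ^ ((1:ℝ) / 2) ≤ 1 + |x| := by
          rw [← Real.sqrt_eq_rpow]
          have : 1 + t ^ 2 ≤ (1 + |x|) ^ 2 := by
            nlinarith [sq_abs t, sq_abs x, abs_nonneg x, abs_nonneg t]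
          calc Real.sqrt (1 + t ^ 2) ≤ Real.sqrt ((1 + |x|) ^ 2) :=
              Real.sqrt_le_sqrt this
            _ = 1 + |x| := Real.sqrt_sq (by positivity)
        calc ‖deriv φ t‖ = |deriv φ t| := rfl
          _ ≤ C₀ * (1 + t ^ 2) ^ (β / 2) := hder t
          _ ≤ C₀ * (1 + |x|) := by
            apply mul_le_mul_of_nonneg_left _ hC₀.le
            exact le_trans step1 step2
      have mvt2 := (convex_uIcc (0:ℝ) x).norm_image_sub_le_of_norm_deriv_le
        (f := φ) (C := C₀ * (1 + |x|))
        (fun u _ => hdiff u) hd1 left_mem_uIcc right_mem_uIcc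
      rw [sub_zero] at mvt2
      have hxx : |x| * ξ₁ ≤ x ^ 2 := by
        calc |x| * ξ₁ ≤ |x| * |x| := mul_le_mul_of_nonneg_left hx (abs_nonneg x)
          _ = x ^ 2 := by rw [← sq_abs]; ring
      calc |φ x - φ 0| ≤ C₀ * (1 + |x|) * ‖x‖ := mvt2
        _ = C₀ * |x| + C₀ * (|x| * |x|) := by rw [Real.norm_eq_abs]; ring
        _ ≤ C₀ * (x ^ 2 / ξ₁) + C₀ * x ^ 2 := by
          have h1 : |x| ≤ x ^ 2 / ξ₁ := by
            rw [le_div_iff₀ hξ₁]; exact hxx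
          have h2 : |x| * |x| = x ^ 2 := by rw [← sq_abs]; ring
          rw [h2]
          nlinarith
        _ = C₀ * (1 + 1 / ξ₁) * x ^ 2 := by field_simp; ring
        _ ≤ C * x ^ 2 := mul_le_mul_of_nonneg_right hC₀C (sq_nonneg x)
  refine ⟨C, hCpos, fun ε hε0 hε1 ξ => ?_⟩
  have hθ2 : (3 - 2 * β) / (2 - β) ≤ 2 := by
    rw [div_le_iff₀ h2β]; linarith
  have hεθ : |ε| ^ (2:ℝ) ≤ |ε| ^ ((3 - 2 * β) / (2 - β)) :=
    Real.rpow_le_rpow_of_exponent_ge hε0 hε1 hθ2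
  have hε2 : ε ^ 2 ≤ |ε| ^ ((3 - 2 * β) / (2 - β)) := by
    have heq : ε ^ 2 = |ε| ^ (2:ℝ) := by
      rw [show (2:ℝ) = ((2:ℕ):ℝ) by norm_num, Real.rpow_natCast]
      exact (sq_abs ε).symm
    rw [heq]; exact hεθ
  have hrnn : 0 ≤ |ε| ^ ((3 - 2 * β) / (2 - β)) := Real.rpow_nonneg (abs_nonneg ε) _
  calc |φ (ε * ξ) - φ 0| ≤ C * (ε * ξ) ^ 2 := key (ε * ξ)
    _ = C * (ε ^ 2 * ξ ^ 2) := by ring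
    _ ≤ C * (|ε| ^ ((3 - 2 * β) / (2 - β)) * (1 + ξ ^ 2)) := by
        apply mul_le_mul_of_nonneg_left _ hCpos.le
        have h1 : ε ^ 2 * ξ ^ 2 ≤ |ε| ^ ((3 - 2 * β) / (2 - β)) * ξ ^ 2 :=
          mul_le_mul_of_nonneg_right hε2 (sq_nonneg ξ)
        have h2 : |ε| ^ ((3 - 2 * β) / (2 - β)) * ξ ^ 2 ≤
            |ε| ^ ((3 - 2 * β) / (2 - β)) * (1 + ξ ^ 2) :=
          mul_le_mul_of_nonneg_left (by nlinarith) hrnn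
        linarith
    _ = C * |ε| ^ ((3 - 2 * β) / (2 - β)) * (1 + ξ ^ 2) := by ring
end

section
/- Let M : ℝ → ℝ be even and differentiable on ℝ with |M'(ξ)| ≤ C₀ (1+ξ²)^{β/2} for all ξ, where β < 1, suppose M is twice differentiable on some interval (-ξ₁, ξ₁) (ξ₁ > 0) with M'' bounded there, M''(0) < 0, and inf_{ξ∈ℝ} ( M(ξ) + M(0) ) > 0. For ε ∈ ℝ set ω_ε = M(0) - (1/2) M''(0) ε². Then there exists C > 0 such that for every real ε with 0 < |ε| ≤ 1 and every ξ ∈ ℝ, | 1/( ω_ε + M(εξ) ) - 1/( 2 M(0) ) | ≤ C |ε|^{(3-2β)/(2-β)} (1 + ξ²). -/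
open Set

/-!
Writing `ω_ε = M 0 + c ε²` with `c = -M''(0)/2 > 0`, both denominators `ω_ε + M(εξ)` and `2 M(0)`
are at least `m₃ = inf (M + M 0)`, so the difference of the reciprocals is at most
`|M(εξ) - M(0) - c ε²| / m₃²`. Evenness gives `M'(0) = 0`, so `|M η - M 0| ≤ K η²`: near `0` because
`M'` is differentiable at `0`, and away from `0` because `|M'(x)| ≤ C₀ (1 + |x|)` when `β ≤ 1`.
This bounds the difference by a multiple of `ε² (1 + ξ²)`, and `ε² ≤ |ε| ^ ((3 - 2β)/(2 - β))`
for `|ε| ≤ 1` since that exponent is at most `2`.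
-/

lemma deriv_zero_eq_zero_of_even {f : ℝ → ℝ} (hf : ∀ x, f (-x) = f x) : deriv f 0 = 0 := by
  have h := deriv_comp_neg (f := f) (x := 0)
  simp only [hf, neg_zero] at h
  linarith

lemma abs_sub_apply_zero_le_of_abs_deriv_le {f : ℝ → ℝ} (hf : Differentiable ℝ f) {η C : ℝ}
    (h : ∀ x, |x| ≤ |η| → |deriv f x| ≤ C) : |f η - f 0| ≤ C * |η| := by
  have hmem : ∀ {x : ℝ}, |x| ≤ |η| → x ∈ Metric.closedBall (0 : ℝ) |η| := fun hx => by
    rwa [mem_closedBall_zero_iff, Real.norm_eq_abs]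
  simpa only [Real.norm_eq_abs, sub_zero] using
    (convex_closedBall (0 : ℝ) |η|).norm_image_sub_le_of_norm_deriv_le (fun x _ => hf x)
      (fun x hx => h x (by rwa [mem_closedBall_zero_iff, Real.norm_eq_abs] at hx))
      (hmem (x := 0) (by simp)) (hmem le_rfl)

lemma one_add_sq_rpow_le_one_add_abs {β : ℝ} (hβ : β ≤ 1) (x : ℝ) :
    (1 + x ^ 2) ^ (β / 2) ≤ 1 + |x| :=
  calc (1 + x ^ 2) ^ (β / 2) ≤ (1 + x ^ 2) ^ (1 / 2 : ℝ) :=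
        Real.rpow_le_rpow_of_exponent_le (by nlinarith) (by linarith)
    _ = √(1 + x ^ 2) := (Real.sqrt_eq_rpow _).symm
    _ ≤ 1 + |x| := Real.sqrt_le_iff.mpr ⟨by positivity, by nlinarith [abs_nonneg x, sq_abs x]⟩

lemma exists_abs_sub_apply_zero_le_mul_sq_of_abs_lt {f : ℝ → ℝ} (hf : Differentiable ℝ f)
    (hf'0 : deriv f 0 = 0) (hf'' : DifferentiableAt ℝ (deriv f) 0) :
    ∃ c ≥ 0, ∃ δ > 0, ∀ η, |η| < δ → |f η - f 0| ≤ c * η ^ 2 := by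
  obtain ⟨c, hc⟩ := hf''.isBigO_sub.bound
  obtain ⟨δ, hδ, hball⟩ := Metric.eventually_nhds_iff.mp hc
  have hderiv : ∀ x, |x| < δ → |deriv f x| ≤ c * |x| := fun x hx => by
    simpa [hf'0] using hball (by simpa using hx)
  have hc0 : 0 ≤ c := by
    have h := hderiv (δ / 2) (by rw [abs_of_pos (by positivity)]; linarith)
    exact nonneg_of_mul_nonneg_left ((abs_nonneg _).trans h) (by positivity)
  refine ⟨c, hc0, δ, hδ, fun η hη => ?_⟩
  calc |f η - f 0| ≤ c * |η| * |η| := abs_sub_apply_zero_le_of_abs_deriv_le hf fun x hx =>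
        (hderiv x (hx.trans_lt hη)).trans (by gcongr)
    _ = c * η ^ 2 := by rw [mul_assoc, abs_mul_abs_self, sq]

lemma abs_sub_apply_zero_le_mul_sq_of_le_abs {f : ℝ → ℝ} (hf : Differentiable ℝ f)
    {β C₀ : ℝ} (hβ : β ≤ 1) (hf' : ∀ x, |deriv f x| ≤ C₀ * (1 + x ^ 2) ^ (β / 2))
    {δ η : ℝ} (hδ : 0 < δ) (hη : δ ≤ |η|) :
    |f η - f 0| ≤ C₀ * (1 / δ + 1) * η ^ 2 := by
  have hC₀ : 0 ≤ C₀ := by simpa using (abs_nonneg _).trans (hf' 0)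
  have hone : 1 ≤ |η| / δ := (one_le_div hδ).mpr hη
  calc |f η - f 0| ≤ C₀ * (1 + |η|) * |η| := abs_sub_apply_zero_le_of_abs_deriv_le hf fun x hx =>
        (hf' x).trans (by gcongr; exact (one_add_sq_rpow_le_one_add_abs hβ x).trans (by gcongr))
    _ ≤ C₀ * (|η| / δ + |η|) * |η| := by gcongr
    _ = C₀ * (1 / δ + 1) * η ^ 2 := by rw [← sq_abs η]; ring

lemma exists_abs_sub_apply_zero_le_mul_sq {f : ℝ → ℝ} (hf : Differentiable ℝ f)
    (heven : ∀ x, f (-x) = f x) (hf'' : DifferentiableAt ℝ (deriv f) 0)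
    {β C₀ : ℝ} (hβ : β ≤ 1) (hf' : ∀ x, |deriv f x| ≤ C₀ * (1 + x ^ 2) ^ (β / 2)) :
    ∃ K ≥ 0, ∀ η, |f η - f 0| ≤ K * η ^ 2 := by
  obtain ⟨c, hc0, δ, hδ, hnear⟩ :=
    exists_abs_sub_apply_zero_le_mul_sq_of_abs_lt hf (deriv_zero_eq_zero_of_even heven) hf''
  refine ⟨max c (C₀ * (1 / δ + 1)), le_max_of_le_left hc0, fun η => ?_⟩
  rcases lt_or_ge |η| δ with hη | hη
  · exact (hnear η hη).trans (by gcongr; exact le_max_left _ _)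
  · exact (abs_sub_apply_zero_le_mul_sq_of_le_abs hf hβ hf' hδ hη).trans
      (by gcongr; exact le_max_right _ _)

lemma abs_one_div_sub_one_div_le {a b m : ℝ} (hm : 0 < m) (ha : m ≤ a) (hb : m ≤ b) :
    |1 / a - 1 / b| ≤ |b - a| / m ^ 2 := by
  have ha0 : 0 < a := hm.trans_le ha
  have hb0 : 0 < b := hm.trans_le hb
  rw [div_sub_div _ _ ha0.ne' hb0.ne', one_mul, mul_one, abs_div, abs_of_pos (mul_pos ha0 hb0), sq]
  gcongr

lemma sq_le_abs_rpow_of_le_two {ε α : ℝ} (hε : 0 < |ε|) (hε1 : |ε| ≤ 1) (hα : α ≤ 2) :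
    ε ^ 2 ≤ |ε| ^ α := by
  rw [← sq_abs, ← Real.rpow_two]
  exact Real.rpow_le_rpow_of_exponent_ge hε hε1 hα

theorem resolvent_symbol_approximation_general (M : ℝ → ℝ) (β C₀ : ℝ)
    (hβ : β < 1)
    (heven : ∀ ξ : ℝ, M (-ξ) = M ξ)
    (hdiff : Differentiable ℝ M)
    (hder : ∀ ξ : ℝ, |deriv M ξ| ≤ C₀ * (1 + ξ ^ 2) ^ (β / 2))
    (hM''0 : deriv (deriv M) 0 < 0)
    (hinf : ∃ m₃ > 0, ∀ ξ : ℝ, m₃ ≤ M ξ + M 0) :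
    ∃ C > 0, ∀ ε : ℝ, 0 < |ε| → |ε| ≤ 1 → ∀ ξ : ℝ,
      |1 / ((M 0 - (1/2) * deriv (deriv M) 0 * ε ^ 2) + M (ε * ξ)) - 1 / (2 * M 0)|
        ≤ C * |ε| ^ ((3 - 2 * β) / (2 - β)) * (1 + ξ ^ 2) := by
  obtain ⟨m₃, hm₃, hm⟩ := hinf
  -- `deriv` is `0` where the function is not differentiable, so `hM''0` forces differentiability.
  obtain ⟨K, hK0, hK⟩ := exists_abs_sub_apply_zero_le_mul_sq hdiff heven
    (differentiableAt_of_deriv_ne_zero hM''0.ne) hβ.le hder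
  set c := -(1 / 2) * deriv (deriv M) 0 with hc_def
  have hc : 0 < c := by rw [hc_def]; linarith
  refine ⟨(K + c) / m₃ ^ 2, by positivity, fun ε hε hε1 ξ => ?_⟩
  have hα : (3 - 2 * β) / (2 - β) ≤ 2 := by rw [div_le_iff₀ (by linarith)]; linarith
  have hnum : |2 * M 0 - (M 0 - (1/2) * deriv (deriv M) 0 * ε ^ 2 + M (ε * ξ))|
      ≤ (K + c) * ε ^ 2 * (1 + ξ ^ 2) :=
    calc _ = |(M 0 - M (ε * ξ)) - c * ε ^ 2| := by rw [hc_def]; ring_nf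
      _ ≤ K * (ε * ξ) ^ 2 + c * ε ^ 2 := by
          refine (abs_sub _ _).trans (add_le_add ?_ (abs_of_nonneg (by positivity)).le)
          rw [abs_sub_comm]; exact hK _
      _ ≤ (K + c) * ε ^ 2 * (1 + ξ ^ 2) := by nlinarith [sq_nonneg ε, sq_nonneg ξ]
  calc _ ≤ (K + c) * ε ^ 2 * (1 + ξ ^ 2) / m₃ ^ 2 :=
        (abs_one_div_sub_one_div_le hm₃ (by nlinarith [hm (ε * ξ)]) (by linarith [hm 0])).trans
          (by gcongr)
    _ ≤ (K + c) / m₃ ^ 2 * |ε| ^ ((3 - 2 * β) / (2 - β)) * (1 + ξ ^ 2) := by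
        rw [div_mul_eq_mul_div, div_mul_eq_mul_div, mul_div_assoc, mul_div_assoc]
        gcongr
        exact sq_le_abs_rpow_of_le_two hε hε1 hα

/-- Corollary 3.5: approximation of the resolvent symbol `1/(ω_ε + M(εξ))` by `1/(2M(0))`,
where `ω_ε = M(0) - (1/2) M''(0) ε²`. -/
theorem resolvent_symbol_approximation (M : ℝ → ℝ) (β ξ₁ C₀ : ℝ)
    (hβ : β < 1) (hξ₁ : ξ₁ > 0) (hC₀ : C₀ > 0)
    (heven : ∀ ξ : ℝ, M (-ξ) = M ξ)
    (hdiff : Differentiable ℝ M)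
    (hder : ∀ ξ : ℝ, |deriv M ξ| ≤ C₀ * (1 + ξ ^ 2) ^ (β / 2))
    (hdiff2 : ∀ ξ ∈ Ioo (-ξ₁) ξ₁, DifferentiableAt ℝ (deriv M) ξ)
    (hbdd2 : ∃ B : ℝ, ∀ ξ ∈ Ioo (-ξ₁) ξ₁, |deriv (deriv M) ξ| ≤ B)
    (hM''0 : deriv (deriv M) 0 < 0)
    (hinf : ∃ m₃ > 0, ∀ ξ : ℝ, m₃ ≤ M ξ + M 0) :
    ∃ C > 0, ∀ ε : ℝ, 0 < |ε| → |ε| ≤ 1 → ∀ ξ : ℝ,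
      |1 / ((M 0 - (1/2) * deriv (deriv M) 0 * ε ^ 2) + M (ε * ξ)) - 1 / (2 * M 0)|
        ≤ C * |ε| ^ ((3 - 2 * β) / (2 - β)) * (1 + ξ ^ 2) :=
  resolvent_symbol_approximation_general M β C₀ hβ heven hdiff hder hM''0 hinf
end

section
/- Let M : ℝ → ℝ be even, differentiable on ℝ with |M'(ξ)| ≤ C₀ (1+ξ²)^{β/2} for all ξ and some β < 1, three times continuously differentiable with Lipschitz continuous third derivative on [-ξ₁, ξ₁] for some ξ₁ > 0, with sup_{|ξ| ≥ ξ₁} M(ξ) < M(0), sup_{|ξ| ≤ ξ₁} M''(ξ) < 0, and inf_{ξ∈ℝ} ( M(ξ) + M(0) ) > 0. Then there exists C > 0 such that for every ε ≠ 0 and every ξ ∈ ℝ, | ε² / ( M(0) - (1/2) M''(0) ε² - M(εξ) ) + 2 / ( M''(0) (1 + ξ²) ) | ≤ C ε². -/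
/-!
Put `q = -M''(0)/2`, `g = M 0 - M` and `h = εξ`. The quantity to bound is
`ε² (1/(qε² + g h) - 1/(q(ε² + h²)))`, so it suffices to bound the bracket uniformly.
For `|h| < ξ₁`, concavity gives `g h ≥ c h²` and a third-order Taylor expansion (the odd
derivatives of the even `M` vanish at `0`) gives `|g h - q h²| ≤ K h⁴`; the bracket is then
at most `K/(cq)`. For `|h| ≥ ξ₁`, `g h` is bounded below by `M 0 - m₁ > 0` and `ε² + h² ≥ ξ₁²`,
so both terms of the bracket are bounded.
-/

open Set

open Nat in
theorem taylor_mean_remainder_lagrange_iteratedDeriv_of_isOpen {f : ℝ → ℝ} {U : Set ℝ}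
    (hU : IsOpen U) {n : ℕ} (hf : ContDiffOn ℝ (n + 1) f U) {x₀ x : ℝ} (hx : x₀ ≠ x)
    (hxU : uIcc x₀ x ⊆ U) :
    ∃ x' ∈ uIoo x₀ x, f x = ∑ k ∈ Finset.range (n + 1), iteratedDeriv k f x₀ / k ! * (x - x₀) ^ k
      + iteratedDeriv (n + 1) f x' * (x - x₀) ^ (n + 1) / (n + 1)! := by
  obtain ⟨x', hx', h⟩ := taylor_mean_remainder_lagrange_iteratedDeriv hx (hf.mono hxU)
  refine ⟨x', hx', ?_⟩
  have hcoeff : ∀ k ∈ Finset.range (n + 1),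
      iteratedDerivWithin k f (uIcc x₀ x) x₀ = iteratedDeriv k f x₀ := fun k hk =>
    iteratedDerivWithin_eq_iteratedDeriv (uniqueDiffOn_uIcc hx)
      ((hf.contDiffAt (hU.mem_nhds (hxU left_mem_uIcc))).of_le
        (by exact_mod_cast (Finset.mem_range.mp hk).le)) left_mem_uIcc
  have htaylor : taylorWithinEval f n (uIcc x₀ x) x₀ x =
      ∑ k ∈ Finset.range (n + 1), iteratedDeriv k f x₀ / k ! * (x - x₀) ^ k := by
    rw [taylor_within_apply]
    refine Finset.sum_congr rfl fun k hk => ?_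
    rw [hcoeff k hk, smul_eq_mul]
    ring
  rw [← h, htaylor]
  ring

theorem Function.Even.iteratedDeriv_eq_zero_of_odd {f : ℝ → ℝ} (hf : f.Even) {n : ℕ}
    (hn : Odd n) : iteratedDeriv n f 0 = 0 := by
  have h := iteratedDeriv_comp_neg n f 0
  rw [show (fun x ↦ f (-x)) = f from funext hf, hn.neg_one_pow, neg_zero, neg_one_smul] at h
  exact self_eq_neg.mp h

section

variable {f : ℝ → ℝ} {r : ℝ}

theorem le_add_mul_sq_of_deriv_deriv_le (hf : ContDiffOn ℝ 2 f (Ioo (-r) r))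
    (hf₁ : deriv f 0 = 0) {m : ℝ} (hm : ∀ x ∈ Ioo (-r) r, deriv (deriv f) x ≤ m) {t : ℝ}
    (ht : t ∈ Ioo (-r) r) : f t ≤ f 0 + m / 2 * t ^ 2 := by
  rcases eq_or_ne t 0 with rfl | ht₀
  · simp
  have h0 : (0 : ℝ) ∈ Ioo (-r) r := by constructor <;> linarith [ht.1, ht.2]
  obtain ⟨x', hx', hf_eq⟩ := taylor_mean_remainder_lagrange_iteratedDeriv_of_isOpen (n := 1)
    isOpen_Ioo hf ht₀.symm (ordConnected_Ioo.uIcc_subset h0 ht)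
  have hx'U : x' ∈ Ioo (-r) r := uIoo_subset_Ioo ⟨h0.1.le, h0.2.le⟩ ⟨ht.1.le, ht.2.le⟩ hx'
  simp only [Finset.sum_range_succ, Finset.sum_range_zero, iteratedDeriv_zero, iteratedDeriv_succ,
    hf₁] at hf_eq
  have hx'm := hm x' hx'U
  rw [hf_eq]
  norm_num [Nat.factorial]
  nlinarith [sq_nonneg t]

theorem abs_sub_sub_mul_sq_le_of_lipschitzOnWith (hf : ContDiffOn ℝ 3 f (Ioo (-r) r))
    (hf₁ : deriv f 0 = 0) (hf₃ : iteratedDeriv 3 f 0 = 0) {L : NNReal}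
    (hL : LipschitzOnWith L (iteratedDeriv 3 f) (Ioo (-r) r)) {t : ℝ} (ht : t ∈ Ioo (-r) r) :
    |f t - f 0 - deriv (deriv f) 0 / 2 * t ^ 2| ≤ L / 6 * t ^ 4 := by
  rcases eq_or_ne t 0 with rfl | ht₀
  · simp
  have h0 : (0 : ℝ) ∈ Ioo (-r) r := by constructor <;> linarith [ht.1, ht.2]
  obtain ⟨x', hx', hf_eq⟩ := taylor_mean_remainder_lagrange_iteratedDeriv_of_isOpen (n := 2)
    isOpen_Ioo hf ht₀.symm (ordConnected_Ioo.uIcc_subset h0 ht)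
  have hx'U : x' ∈ Ioo (-r) r := uIoo_subset_Ioo ⟨h0.1.le, h0.2.le⟩ ⟨ht.1.le, ht.2.le⟩ hx'
  have hx't : |x'| ≤ |t| := by
    simpa using abs_sub_left_of_mem_uIcc (uIoo_subset_uIcc_self hx')
  have hf₃x' : |iteratedDeriv 3 f x'| ≤ L * |t| := by
    have := hL.dist_le_mul x' hx'U 0 h0
    rw [Real.dist_eq, Real.dist_eq, hf₃, sub_zero, sub_zero] at this
    exact this.trans (by gcongr)
  have hrem : f t - f 0 - deriv (deriv f) 0 / 2 * t ^ 2 = iteratedDeriv 3 f x' * t ^ 3 / 6 := by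
    have h2 : iteratedDeriv 2 f = deriv (deriv f) := by rw [iteratedDeriv_succ, iteratedDeriv_one]
    simp only [Finset.sum_range_succ, Finset.sum_range_zero, iteratedDeriv_zero, iteratedDeriv_one,
      h2, hf₁] at hf_eq
    rw [hf_eq]
    norm_num [Nat.factorial]
    ring
  calc |f t - f 0 - deriv (deriv f) 0 / 2 * t ^ 2| = |iteratedDeriv 3 f x'| * |t| ^ 3 / 6 := by
        rw [hrem, abs_div, abs_mul, abs_pow]; norm_num
    _ ≤ L * |t| * |t| ^ 3 / 6 := by gcongr
    _ = L / 6 * |t| ^ 4 := by ring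
    _ = L / 6 * t ^ 4 := by rw [pow_abs, abs_of_nonneg (by positivity)]
end

section

variable {q a g h : ℝ}

theorem abs_one_div_sub_one_div_le_of_near {c K : ℝ} (hq : 0 < q) (hc : 0 < c) (hcq : c ≤ q)
    (hK : 0 ≤ K) (ha : 0 < a) (hg : c * h ^ 2 ≤ g) (hgq : |g - q * h ^ 2| ≤ K * h ^ 4) :
    |1 / (q * a + g) - 1 / (q * (a + h ^ 2))| ≤ K / (c * q) := by
  have hS : 0 < a + h ^ 2 := by positivity
  have hD : c * (a + h ^ 2) ≤ q * a + g := by nlinarith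
  have hD₀ : 0 < q * a + g := lt_of_lt_of_le (by positivity) hD
  have hh : K * h ^ 4 ≤ K * (a + h ^ 2) ^ 2 := by gcongr; nlinarith [sq_nonneg h]
  calc |1 / (q * a + g) - 1 / (q * (a + h ^ 2))|
      = |g - q * h ^ 2| / ((q * a + g) * (q * (a + h ^ 2))) := by
        have hid : 1 / (q * a + g) - 1 / (q * (a + h ^ 2))
            = -(g - q * h ^ 2) / ((q * a + g) * (q * (a + h ^ 2))) := by
          field_simp
          ring
        rw [hid, abs_div, abs_neg, abs_of_pos (mul_pos hD₀ (mul_pos hq hS))]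
    _ ≤ K * (a + h ^ 2) ^ 2 / (c * (a + h ^ 2) * (q * (a + h ^ 2))) := by
        gcongr
        exact hgq.trans hh
    _ = K / (c * q) := by field_simp

theorem abs_one_div_sub_one_div_le_of_far {δ ρ : ℝ} (hq : 0 < q) (hδ : 0 < δ) (hρ : 0 < ρ)
    (ha : 0 < a) (hg : δ ≤ g) (hh : ρ ≤ |h|) :
    |1 / (q * a + g) - 1 / (q * (a + h ^ 2))| ≤ 1 / δ + 1 / (q * ρ ^ 2) := by
  have hρh : ρ ^ 2 ≤ a + h ^ 2 := by nlinarith [sq_abs h, abs_nonneg h]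
  have hD₀ : 0 < q * a + g := by nlinarith
  calc |1 / (q * a + g) - 1 / (q * (a + h ^ 2))|
      ≤ |1 / (q * a + g)| + |1 / (q * (a + h ^ 2))| := abs_sub _ _
    _ = 1 / (q * a + g) + 1 / (q * (a + h ^ 2)) := by
        rw [abs_of_pos (by positivity), abs_of_pos (by positivity)]
    _ ≤ 1 / δ + 1 / (q * ρ ^ 2) := by gcongr; nlinarith
end

theorem exists_abs_one_div_sub_one_div_le (g : ℝ → ℝ) {q c K δ ρ : ℝ} (hq : 0 < q) (hc : 0 < c)
    (hcq : c ≤ q) (hK : 0 ≤ K) (hδ : 0 < δ) (hρ : 0 < ρ)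
    (hnear : ∀ h, |h| < ρ → c * h ^ 2 ≤ g h) (hquad : ∀ h, |h| < ρ → |g h - q * h ^ 2| ≤ K * h ^ 4)
    (hfar : ∀ h, ρ ≤ |h| → δ ≤ g h) :
    ∃ C > 0, ∀ a > 0, ∀ h, |1 / (q * a + g h) - 1 / (q * (a + h ^ 2))| ≤ C := by
  refine ⟨max (K / (c * q)) (1 / δ + 1 / (q * ρ ^ 2)), lt_max_of_lt_right (by positivity),
    fun a ha h => ?_⟩
  rcases lt_or_ge |h| ρ with hh | hh
  · exact le_max_of_le_left
      (abs_one_div_sub_one_div_le_of_near hq hc hcq hK ha (hnear h hh) (hquad h hh))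
  · exact le_max_of_le_right (abs_one_div_sub_one_div_le_of_far hq hδ hρ ha (hfar h hh) hh)

theorem rescaled_resolvent_approximation_general (M : ℝ → ℝ) (ξ₁ : ℝ)
    (hξ₁ : ξ₁ > 0)
    (heven : ∀ ξ : ℝ, M (-ξ) = M ξ)
    (hC3 : ContDiffOn ℝ 3 M (Icc (-ξ₁) ξ₁))
    (hLip : ∃ L : NNReal, LipschitzOnWith L (iteratedDeriv 3 M) (Icc (-ξ₁) ξ₁))
    (hm₁ : ∃ m₁ < M 0, ∀ ξ : ℝ, ξ₁ ≤ |ξ| → M ξ ≤ m₁)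
    (hm₂ : ∃ m₂ < (0 : ℝ), ∀ ξ : ℝ, |ξ| ≤ ξ₁ → deriv (deriv M) ξ ≤ m₂) :
    ∃ C > 0, ∀ ε : ℝ, ε ≠ 0 → ∀ ξ : ℝ,
      |ε ^ 2 / (M 0 - (1/2) * deriv (deriv M) 0 * ε ^ 2 - M (ε * ξ))
          + 2 / (deriv (deriv M) 0 * (1 + ξ ^ 2))|
        ≤ C * ε ^ 2 := by
  obtain ⟨L, hLip⟩ := hLip
  obtain ⟨m₁, hm₁M, hm₁⟩ := hm₁
  obtain ⟨m₂, hm₂₀, hm₂⟩ := hm₂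
  set μ := deriv (deriv M) 0
  have hμ : μ ≤ m₂ := hm₂ 0 (by simpa using hξ₁.le)
  have hM : ContDiffOn ℝ 3 M (Ioo (-ξ₁) ξ₁) := hC3.mono Ioo_subset_Icc_self
  have hM₁ : deriv M 0 = 0 := by
    simpa using Function.Even.iteratedDeriv_eq_zero_of_odd heven odd_one
  have hM₃ : iteratedDeriv 3 M 0 = 0 :=
    Function.Even.iteratedDeriv_eq_zero_of_odd heven (by decide)
  have hnear : ∀ h, |h| < ξ₁ → -m₂ / 2 * h ^ 2 ≤ M 0 - M h := fun h hh => by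
    have := le_add_mul_sq_of_deriv_deriv_le (hM.of_le (by norm_num)) hM₁
      (fun x hx => hm₂ x (abs_le.mpr ⟨hx.1.le, hx.2.le⟩)) (abs_lt.mp hh)
    linarith
  have hquad : ∀ h, |h| < ξ₁ → |M 0 - M h - -μ / 2 * h ^ 2| ≤ L / 6 * h ^ 4 := fun h hh => by
    rw [← abs_neg]
    convert abs_sub_sub_mul_sq_le_of_lipschitzOnWith hM hM₁ hM₃ (hLip.mono Ioo_subset_Icc_self)
      (abs_lt.mp hh) using 2
    ring
  have hfar : ∀ h, ξ₁ ≤ |h| → M 0 - m₁ ≤ M 0 - M h := fun h hh => by linarith [hm₁ h hh]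
  obtain ⟨C, hC, hbound⟩ := exists_abs_one_div_sub_one_div_le (fun h => M 0 - M h) (by linarith)
    (by linarith) (by linarith) (by positivity) (sub_pos.mpr hm₁M) hξ₁ hnear hquad hfar
  refine ⟨C, hC, fun ε hε ξ => ?_⟩
  have hid : ε ^ 2 / (M 0 - (1/2) * μ * ε ^ 2 - M (ε * ξ)) + 2 / (μ * (1 + ξ ^ 2)) =
      ε ^ 2 * (1 / (-μ / 2 * ε ^ 2 + (M 0 - M (ε * ξ)))
        - 1 / (-μ / 2 * (ε ^ 2 + (ε * ξ) ^ 2))) := by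
    field_simp
    ring
  rw [hid, abs_mul, abs_of_pos (by positivity), mul_comm]
  gcongr
  exact hbound _ (by positivity) _

/-- Lemma 3.6 (Stefanov–Wright): uniform approximation of the rescaled resolvent symbol
`ε²/(ω_ε - M(εξ))` by the KdV resolvent symbol `-2/(M''(0)(1+ξ²))`,
where `ω_ε = M(0) - (1/2) M''(0) ε²`. -/
theorem rescaled_resolvent_approximation (M : ℝ → ℝ) (β ξ₁ C₀ : ℝ)
    (hβ : β < 1) (hξ₁ : ξ₁ > 0) (hC₀ : C₀ > 0)
    (heven : ∀ ξ : ℝ, M (-ξ) = M ξ)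
    (hdiff : Differentiable ℝ M)
    (hder : ∀ ξ : ℝ, |deriv M ξ| ≤ C₀ * (1 + ξ ^ 2) ^ (β / 2))
    (hC3 : ContDiffOn ℝ 3 M (Icc (-ξ₁) ξ₁))
    (hLip : ∃ L : NNReal, LipschitzOnWith L (iteratedDeriv 3 M) (Icc (-ξ₁) ξ₁))
    (hm₁ : ∃ m₁ < M 0, ∀ ξ : ℝ, ξ₁ ≤ |ξ| → M ξ ≤ m₁)
    (hm₂ : ∃ m₂ < (0 : ℝ), ∀ ξ : ℝ, |ξ| ≤ ξ₁ → deriv (deriv M) ξ ≤ m₂)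
    (hm₃ : ∃ m₃ > (0 : ℝ), ∀ ξ : ℝ, m₃ ≤ M ξ + M 0) :
    ∃ C > 0, ∀ ε : ℝ, ε ≠ 0 → ∀ ξ : ℝ,
      |ε ^ 2 / (M 0 - (1/2) * deriv (deriv M) 0 * ε ^ 2 - M (ε * ξ))
          + 2 / (deriv (deriv M) 0 * (1 + ξ ^ 2))|
        ≤ C * ε ^ 2 :=
  rescaled_resolvent_approximation_general M ξ₁ hξ₁ heven hC3 hLip hm₁ hm₂
end

section
/- Let f : ℝ → ℝ be twice continuously differentiable, with f and f'' square integrable, and suppose f is even (f(-x) = f(x) for all x) and satisfies -f''(x) + f(x) - 3 sech²(x/2) f(x) = 0 for all x ∈ ℝ. Then f is identically zero. (The kernel of the Schrödinger operator -∂ₓ² + 1 - 3 sech²(x/2) on H²(ℝ) is spanned by the odd function (sech²(x/2))', so it contains no nontrivial even function.) -/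
/-!
The function `g = sinh (x/2) / cosh³ (x/2) = -(sech² (x/2))'` is an odd solution of `g'' = q g`,
`q = 1 - 3 sech² (x/2)`, and `g`, `g'` are bounded. The Wronskian `W = f g' - f' g` is constant,
and since `W = 2 f g' - (f g)'`, integrating it over a window on which `f` is small in `L²` (and
small at the endpoints) shows `W = 0`. At the origin `g = 0` and `g' = 1/2`, so `f 0 = 0`;
evenness gives `f' 0 = 0`, and uniqueness for the linear ODE `f'' = q f` forces `f = 0`.
-/

open MeasureTheory Filter Topology Set
open scoped NNReal

section LinearODE

variable {q f f' : ℝ → ℝ}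

theorem eq_zero_of_hasDerivAt_of_hasDerivAt_mul {K : ℝ≥0} (hq : ∀ x, ‖q x‖₊ ≤ K)
    (hf : ∀ x, HasDerivAt f (f' x) x) (hf' : ∀ x, HasDerivAt f' (q x * f x) x) {t₀ : ℝ}
    (h₀ : f t₀ = 0) (h₀' : f' t₀ = 0) : f = 0 := by
  have hlip (t : ℝ) : LipschitzWith (max 1 K) fun p : ℝ × ℝ => (p.2, q t * p.1) :=
    LipschitzWith.prod_snd.prodMk
      (((lipschitzWith_smul (q t)).comp LipschitzWith.prod_fst).weaken (by simpa using hq t))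
  have hsol : (fun t => (f t, f' t)) = fun _ => ((0 : ℝ), (0 : ℝ)) :=
    ODE_solution_unique_univ (v := fun t p => (p.2, q t * p.1)) (s := fun _ => univ) (t₀ := t₀)
      (fun t => (hlip t).lipschitzOnWith) (fun t => ⟨(hf t).prodMk (hf' t), trivial⟩)
      (fun t => ⟨by convert hasDerivAt_const t ((0 : ℝ), (0 : ℝ)) <;> simp, trivial⟩)
      (by simp [h₀, h₀'])
  funext x
  exact congrArg Prod.fst (congrFun hsol x)

theorem wronskian_eq_of_hasDerivAt {g g' : ℝ → ℝ} (hf : ∀ x, HasDerivAt f (f' x) x)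
    (hf' : ∀ x, HasDerivAt f' (q x * f x) x) (hg : ∀ x, HasDerivAt g (g' x) x)
    (hg' : ∀ x, HasDerivAt g' (q x * g x) x) (x y : ℝ) :
    f x * g' x - f' x * g x = f y * g' y - f' y * g y := by
  have hW (x : ℝ) : HasDerivAt (fun x => f x * g' x - f' x * g x) 0 x :=
    (((hf x).mul (hg' x)).sub ((hf' x).mul (hg x))).congr_deriv (by ring)
  exact is_const_of_deriv_eq_zero (fun x => (hW x).differentiableAt) (fun x => (hW x).deriv) x y

end LinearODE

theorem tendsto_intervalIntegral_add_atTop {h : ℝ → ℝ} (hh : Integrable h) (L : ℝ) :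
    Tendsto (fun t => ∫ x in t..t + L, h x) atTop (𝓝 0) := by
  have hlim {b : ℝ → ℝ} (hb : Tendsto b atTop atTop) :
      Tendsto (fun t => ∫ x in 0..b t, h x) atTop (𝓝 (∫ x in Ioi 0, h x)) :=
    intervalIntegral_tendsto_integral_Ioi 0 hh.integrableOn hb
  have := (hlim (tendsto_atTop_add_const_right _ L tendsto_id)).sub (hlim tendsto_id)
  rw [sub_self] at this
  refine this.congr fun t => ?_
  exact intervalIntegral.integral_interval_sub_left (hh.intervalIntegrable ..)
    (hh.intervalIntegrable ..)

theorem exists_mem_Icc_mul_le_intervalIntegral {h : ℝ → ℝ} (hh : Continuous h) {a b : ℝ}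
    (hab : a ≤ b) : ∃ c ∈ Icc a b, (b - a) * h c ≤ ∫ x in a..b, h x := by
  obtain ⟨c, hc, hmin⟩ := isCompact_Icc.exists_isMinOn (nonempty_Icc.2 hab) hh.continuousOn
  refine ⟨c, hc, ?_⟩
  calc (b - a) * h c = ∫ _ in a..b, h c := by simp
    _ ≤ ∫ x in a..b, h x :=
      intervalIntegral.integral_mono_on hab intervalIntegrable_const (hh.intervalIntegrable _ _)
        fun x hx => hmin hx

theorem exists_abs_le_of_memLp_two {f : ℝ → ℝ} (hf : Continuous f)
    (hfL2 : MemLp f 2 volume) {r : ℝ} (hr : 0 < r) :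
    ∃ a b, 1 ≤ b - a ∧ |f a| ≤ r ∧ |f b| ≤ r ∧ ∫ x in a..b, |f x| ≤ 2 * r := by
  have hf2 : Continuous fun x => f x ^ 2 := hf.pow 2
  obtain ⟨t, ht⟩ := ((tendsto_intervalIntegral_add_atTop hfL2.integrable_sq 3).eventually
    (ge_mem_nhds (pow_pos hr 2))).exists
  have hwindow {u v : ℝ} (htu : t ≤ u) (huv : u ≤ v) (hvt : v ≤ t + 3) :
      ∫ x in u..v, f x ^ 2 ≤ r ^ 2 :=
    (intervalIntegral.integral_mono_interval htu huv hvt (ae_of_all _ fun x => sq_nonneg _)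
      (hf2.intervalIntegrable _ _)).trans ht
  have hpoint {u : ℝ} (htu : t ≤ u) (hut : u ≤ t + 2) : ∃ c ∈ Icc u (u + 1), |f c| ≤ r := by
    obtain ⟨c, hc, hle⟩ := exists_mem_Icc_mul_le_intervalIntegral hf2 (by linarith : u ≤ u + 1)
    refine ⟨c, hc, abs_le_of_sq_le_sq ?_ hr.le⟩
    linarith [hwindow htu (by linarith : u ≤ u + 1) (by linarith)]
  obtain ⟨a, ha, hfa⟩ := hpoint le_rfl (by linarith)
  obtain ⟨b, hb, hfb⟩ := hpoint (by linarith) le_rfl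
  have hab : a ≤ b := by linarith [ha.2, hb.1]
  refine ⟨a, b, by linarith [ha.2, hb.1], hfa, hfb, ?_⟩
  -- `|y| ≤ y² / (2r) + r / 2` by AM-GM
  calc ∫ x in a..b, |f x| ≤ ∫ x in a..b, (f x ^ 2 / (2 * r) + r / 2) := by
        refine intervalIntegral.integral_mono_on hab (hf.abs.intervalIntegrable _ _)
          (((hf2.div_const _).add continuous_const).intervalIntegrable _ _) fun x _ => ?_
        rw [div_add' _ _ _ (by positivity), le_div_iff₀ (by positivity)]
        nlinarith [sq_abs (f x), sq_nonneg (|f x| - r)]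
    _ = (∫ x in a..b, f x ^ 2) / (2 * r) + (b - a) * (r / 2) := by
        rw [intervalIntegral.integral_add ((hf2.div_const _).intervalIntegrable _ _)
          intervalIntegrable_const, intervalIntegral.integral_div, intervalIntegral.integral_const,
          smul_eq_mul]
    _ ≤ r ^ 2 / (2 * r) + 3 * (r / 2) := by
        gcongr
        · exact hwindow ha.1 hab (by linarith [hb.2])
        · linarith [ha.1, hb.2]
    _ = 2 * r := by field_simp; ring

theorem wronskian_eq_zero_of_memLp {f f' g g' : ℝ → ℝ} {B c : ℝ}
    (hf : ∀ x, HasDerivAt f (f' x) x) (hg : ∀ x, HasDerivAt g (g' x) x) (hg'c : Continuous g')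
    (hfL2 : MemLp f 2 volume) (hgB : ∀ x, |g x| ≤ B) (hg'B : ∀ x, |g' x| ≤ B)
    (hW : ∀ x, f x * g' x - f' x * g x = c) : c = 0 := by
  have hfc : Continuous f := continuous_iff_continuousAt.2 fun x => (hf x).continuousAt
  have hB : 0 ≤ B := (abs_nonneg _).trans (hgB 0)
  suffices h : ∀ r > 0, |c| ≤ 6 * B * r by
    by_contra hc
    have := h (|c| / (6 * B + 1)) (by positivity)
    rw [← mul_div_assoc, le_div_iff₀ (by positivity)] at this
    nlinarith [abs_pos.2 hc]
  intro r hr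
  obtain ⟨a, b, hab, hfa, hfb, hint⟩ := exists_abs_le_of_memLp_two hfc hfL2 hr
  have hfg' : Continuous fun x => f x * g' x := hfc.mul hg'c
  -- `(f g)' = f' g + f g' = 2 f g' - c`
  have hfg : ∫ x in a..b, (2 * (f x * g' x) - c) = f b * g b - f a * g a :=
    intervalIntegral.integral_eq_sub_of_hasDerivAt
      (fun x _ => ((hf x).mul (hg x)).congr_deriv (by linarith [hW x]))
      (((continuous_const.mul hfg').sub continuous_const).intervalIntegrable _ _)
  rw [intervalIntegral.integral_sub (f := fun x => 2 * (f x * g' x))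
    ((continuous_const.mul hfg').intervalIntegrable _ _) intervalIntegrable_const,
    intervalIntegral.integral_const_mul, intervalIntegral.integral_const,
    smul_eq_mul] at hfg
  have hab' : a ≤ b := by linarith
  have hfgB : |∫ x in a..b, f x * g' x| ≤ B * (2 * r) := calc
    |∫ x in a..b, f x * g' x| ≤ ∫ x in a..b, |f x| * B := by
      refine (intervalIntegral.abs_integral_le_integral_abs hab').trans
        (intervalIntegral.integral_mono_on hab' (hfg'.abs.intervalIntegrable _ _)
          ((hfc.abs.mul continuous_const).intervalIntegrable _ _) fun x _ => ?_)
      rw [abs_mul]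
      exact mul_le_mul_of_nonneg_left (hg'B x) (abs_nonneg _)
    _ = B * ∫ x in a..b, |f x| := by rw [intervalIntegral.integral_mul_const, mul_comm]
    _ ≤ B * (2 * r) := by gcongr
  have hfgab : |f b * g b - f a * g a| ≤ 2 * B * r := calc
    _ ≤ |f b| * |g b| + |f a| * |g a| := by rw [← abs_mul, ← abs_mul]; exact abs_sub _ _
    _ ≤ r * B + r * B := by gcongr <;> apply hgB
    _ = 2 * B * r := by ring
  calc |c| ≤ |c| * (b - a) := le_mul_of_one_le_right (abs_nonneg c) hab
    _ = |2 * (∫ x in a..b, f x * g' x) - (f b * g b - f a * g a)| := by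
        rw [← abs_of_pos (by linarith : 0 < b - a), ← abs_mul]; congr 1; linarith
    _ ≤ 2 * |∫ x in a..b, f x * g' x| + |f b * g b - f a * g a| := by
        simpa [abs_mul] using abs_sub (2 * ∫ x in a..b, f x * g' x) (f b * g b - f a * g a)
    _ ≤ 6 * B * r := by linarith

namespace Schroedinger

open Real

noncomputable def coeff (x : ℝ) : ℝ := 1 - 3 * (cosh (x / 2))⁻¹ ^ 2

noncomputable def oddSolution (x : ℝ) : ℝ := sinh (x / 2) / cosh (x / 2) ^ 3

noncomputable def oddSolutionDeriv (x : ℝ) : ℝ :=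
  (3 - 2 * cosh (x / 2) ^ 2) / (2 * cosh (x / 2) ^ 4)

theorem hasDerivAt_oddSolution (x : ℝ) : HasDerivAt oddSolution (oddSolutionDeriv x) x := by
  have hu : HasDerivAt (fun y : ℝ => y / 2) (1 / 2) x := (hasDerivAt_id' x).div_const 2
  refine (hu.sinh.div (hu.cosh.fun_pow 3) (by positivity)).congr_deriv ?_
  rw [oddSolutionDeriv]
  field_simp
  linear_combination 3 * cosh (x / 2) ^ 2 * cosh_sq' (x / 2)

theorem hasDerivAt_oddSolutionDeriv (x : ℝ) :
    HasDerivAt oddSolutionDeriv (coeff x * oddSolution x) x := by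
  have hu : HasDerivAt (fun y : ℝ => y / 2) (1 / 2) x := (hasDerivAt_id' x).div_const 2
  refine (((hu.cosh.fun_pow 2).const_mul 2).const_sub 3).div
    ((hu.cosh.fun_pow 4).const_mul 2) (by positivity) |>.congr_deriv ?_
  rw [coeff, oddSolution]
  field_simp
  ring

theorem continuous_oddSolutionDeriv : Continuous oddSolutionDeriv :=
  continuous_iff_continuousAt.2 fun x => (hasDerivAt_oddSolutionDeriv x).continuousAt

theorem abs_oddSolution_le (x : ℝ) : |oddSolution x| ≤ 1 := by
  have hc := one_le_cosh (x / 2)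
  have h3 : 0 < cosh (x / 2) ^ 3 := by positivity
  rw [oddSolution, abs_div, abs_of_pos h3, div_le_one h3]
  calc |sinh (x / 2)| ≤ cosh (x / 2) :=
        abs_le_of_sq_le_sq (by linarith [cosh_sq' (x / 2)]) (cosh_pos _).le
    _ ≤ cosh (x / 2) ^ 3 := le_self_pow₀ hc (by norm_num)

theorem abs_oddSolutionDeriv_le (x : ℝ) : |oddSolutionDeriv x| ≤ 1 := by
  have hc := one_le_cosh (x / 2)
  have h4 : 0 < 2 * cosh (x / 2) ^ 4 := by positivity
  rw [oddSolutionDeriv, abs_div, abs_of_pos h4, div_le_one h4, abs_le]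
  constructor <;> nlinarith

theorem nnnorm_coeff_le (x : ℝ) : ‖coeff x‖₊ ≤ 2 := by
  have hc := one_le_cosh (x / 2)
  have h1 : (cosh (x / 2))⁻¹ ≤ 1 := inv_le_one_of_one_le₀ hc
  have h0 : 0 < (cosh (x / 2))⁻¹ := by positivity
  rw [← NNReal.coe_le_coe, coe_nnnorm, Real.norm_eq_abs, coeff, abs_le]
  constructor <;> push_cast <;> nlinarith

theorem oddSolution_zero : oddSolution 0 = 0 := by simp [oddSolution]

theorem oddSolutionDeriv_zero : oddSolutionDeriv 0 = 1 / 2 := by norm_num [oddSolutionDeriv]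

end Schroedinger

theorem Function.Even.deriv_zero {E : Type*} [NormedAddCommGroup E] [NormedSpace ℝ E]
    {f : ℝ → E} (hf : Function.Even f) : deriv f 0 = 0 := by
  have h := deriv_comp_neg f 0
  rw [show (fun x => f (-x)) = f from funext hf, neg_zero] at h
  have h2 : (2 : ℝ) • deriv f 0 = 0 := by
    rw [two_smul]; nth_rewrite 2 [h]; exact add_neg_cancel _
  exact (smul_eq_zero.mp h2).resolve_left two_ne_zero

open Schroedinger in
theorem schroedinger_kernel_no_even_general (f : ℝ → ℝ)
    (hC2 : ContDiff ℝ 2 f)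
    (hfL2 : MemLp f 2 (volume : Measure ℝ))
    (heven : ∀ x : ℝ, f (-x) = f x)
    (hode : ∀ x : ℝ,
      -deriv (deriv f) x + f x - 3 * ((Real.cosh (x / 2))⁻¹) ^ 2 * f x = 0) :
    f = 0 := by
  have hf : ∀ x, HasDerivAt f (deriv f x) x := fun x =>
    (hC2.differentiable (by norm_num) x).hasDerivAt
  have hf' : ∀ x, HasDerivAt (deriv f) (coeff x * f x) x := fun x =>
    (hC2.differentiable_deriv_two x).hasDerivAt.congr_deriv (by rw [coeff]; linarith [hode x])
  have hW := wronskian_eq_of_hasDerivAt hf hf' hasDerivAt_oddSolution hasDerivAt_oddSolutionDeriv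
  have hW0 := wronskian_eq_zero_of_memLp hf hasDerivAt_oddSolution continuous_oddSolutionDeriv
    hfL2 abs_oddSolution_le abs_oddSolutionDeriv_le (fun x => hW x 0)
  have h₀ : f 0 = 0 := by
    rw [oddSolution_zero, oddSolutionDeriv_zero] at hW0
    linarith
  exact eq_zero_of_hasDerivAt_of_hasDerivAt_mul nnnorm_coeff_le hf hf' h₀
    (Function.Even.deriv_zero heven)

/-- The Schrödinger operator `-∂ₓ² + 1 - 3 sech²(x/2)` has no nontrivial even
function in its kernel: any even `f ∈ H²(ℝ)` with
`-f'' + f - 3 sech²(x/2) f = 0` vanishes identically. -/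
theorem schroedinger_kernel_no_even (f : ℝ → ℝ)
    (hC2 : ContDiff ℝ 2 f)
    (hfL2 : MemLp f 2 (volume : Measure ℝ))
    (hf''L2 : MemLp (deriv (deriv f)) 2 (volume : Measure ℝ))
    (heven : ∀ x : ℝ, f (-x) = f x)
    (hode : ∀ x : ℝ,
      -deriv (deriv f) x + f x - 3 * ((Real.cosh (x / 2))⁻¹) ^ 2 * f x = 0) :
    f = 0 :=
  schroedinger_kernel_no_even_general f hC2 hfL2 heven hode
end

section
/- Let a, c ≤ 0 and b, d ≥ 0 be real numbers with a + b + c + d > 0 and such that either bd > ac or bd = ac = 0, and define M(ξ) = ( (1 - aξ²)(1 - cξ²) / ( (1 + bξ²)(1 + dξ²) ) )^{1/2}. Then M(ξ) < 1 = M(0) for every ξ ≠ 0, and for every ξ₁ > 0 one has sup_{|ξ| ≥ ξ₁} M(ξ) < 1. -/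
open Filter Topology

/-- Under the conditions `a + b + c + d > 0` and `bd > ac` or `bd = ac = 0`, the
(a,b,c,d)-Boussinesq dispersion symbol satisfies `M(ξ) < 1 = M(0)` for `ξ ≠ 0` and
`sup_{|ξ| ≥ ξ₁} M < 1` for every `ξ₁ > 0`. -/
theorem abcd_symbol_subcritical (a b c d : ℝ)
    (ha : a ≤ 0) (hc : c ≤ 0) (hb : b ≥ 0) (hd : d ≥ 0)
    (hsum : a + b + c + d > 0)
    (hbdac : b * d > a * c ∨ (b * d = 0 ∧ a * c = 0))
    (M : ℝ → ℝ)
    (hM : ∀ ξ : ℝ, M ξ =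
      Real.sqrt (((1 - a * ξ ^ 2) * (1 - c * ξ ^ 2)) /
        ((1 + b * ξ ^ 2) * (1 + d * ξ ^ 2)))) :
    M 0 = 1 ∧
    (∀ ξ : ℝ, ξ ≠ 0 → M ξ < 1) ∧
    (∀ ξ₁ : ℝ, ξ₁ > 0 → ∃ m < (1 : ℝ), ∀ ξ : ℝ, ξ₁ ≤ |ξ| → M ξ ≤ m) := by
  have hD : ∀ x : ℝ, 0 ≤ x → (0:ℝ) < (1 + b * x) * (1 + d * x) := by
    intro x hx; nlinarith [mul_nonneg hb hx, mul_nonneg hd hx,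
      mul_nonneg (mul_nonneg hb hx) (mul_nonneg hd hx)]
  have hN : ∀ x : ℝ, 0 ≤ x → (0:ℝ) ≤ (1 - a * x) * (1 - c * x) := by
    intro x hx
    have h1 : (0:ℝ) ≤ -a * x := mul_nonneg (by linarith) hx
    have h2 : (0:ℝ) ≤ -c * x := mul_nonneg (by linarith) hx
    nlinarith
  refine ⟨by rw [hM]; norm_num, ?_, ?_⟩
  · intro ξ hξ
    rw [hM]
    have hx : 0 < ξ ^ 2 := by positivity
    have hlt : (1 - a * ξ^2) * (1 - c * ξ^2) < (1 + b * ξ^2) * (1 + d * ξ^2) := by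
      rcases hbdac with h | ⟨h1, h2⟩
      · nlinarith [mul_pos hx hx, mul_pos hsum hx]
      · have e1 : b * d * ξ^2 * ξ^2 = 0 := by rw [h1]; ring
        have e2 : a * c * ξ^2 * ξ^2 = 0 := by rw [h2]; ring
        nlinarith [mul_pos hsum hx, e1, e2]
    have h1 : ((1 - a * ξ^2) * (1 - c * ξ^2)) / ((1 + b * ξ^2) * (1 + d * ξ^2)) < 1 :=
      (div_lt_one (hD _ hx.le)).mpr hlt
    calc Real.sqrt (((1 - a * ξ^2) * (1 - c * ξ^2)) / ((1 + b * ξ^2) * (1 + d * ξ^2)))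
        < Real.sqrt 1 :=
          Real.sqrt_lt_sqrt (div_nonneg (hN _ hx.le) (hD _ hx.le).le) h1
      _ = 1 := Real.sqrt_one
  · intro ξ₁ hξ₁
    have hx1 : 0 < ξ₁ ^ 2 := by positivity
    rcases hbdac with h | ⟨h1, h2⟩
    · -- case b*d > a*c
      have hp : 0 < b * d - a * c := by linarith
      have hE : 0 < 1 + (b + d) * ξ₁^2 + b * d * ξ₁^4 := by
        have h3 : 0 ≤ (b + d) * ξ₁^2 := mul_nonneg (by linarith) hx1.le
        have h4 : 0 ≤ b * d * ξ₁^4 := mul_nonneg (mul_nonneg hb hd) (by positivity)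
        linarith
      have key : ∀ x : ℝ, ξ₁^2 ≤ x →
          ((1 - a * x) * (1 - c * x)) / ((1 + b * x) * (1 + d * x)) ≤
            1 - (b * d - a * c) * ξ₁^4 / (1 + (b + d) * ξ₁^2 + b * d * ξ₁^4) := by
        intro x hx
        have hx0 : 0 ≤ x := le_trans hx1.le hx
        have hrw : 1 - (b * d - a * c) * ξ₁^4 / (1 + (b + d) * ξ₁^2 + b * d * ξ₁^4) =
            ((1 + (b + d) * ξ₁^2 + b * d * ξ₁^4) - (b * d - a * c) * ξ₁^4) /
              (1 + (b + d) * ξ₁^2 + b * d * ξ₁^4) := by field_simp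
        rw [hrw, div_le_div_iff₀ (hD x hx0) hE]
        have hxx : 0 ≤ x - ξ₁^2 := by linarith
        have t1 : 0 ≤ (1 + (b + d) * ξ₁^2 + b * d * ξ₁^4) * ((a + b + c + d) * x) :=
          mul_nonneg hE.le (mul_nonneg hsum.le hx0)
        have t2 : 0 ≤ (b * d - a * c) * ((x - ξ₁^2) * (x + ξ₁^2)) :=
          mul_nonneg hp.le (mul_nonneg hxx (by linarith))
        have t3 : 0 ≤ (b * d - a * c) * ((b + d) * ξ₁^2 * x * (x - ξ₁^2)) :=
          mul_nonneg hp.le (mul_nonneg (mul_nonneg (mul_nonneg (by linarith) hx1.le) hx0) hxx)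
        nlinarith [t1, t2, t3]
      have h0 : 0 ≤ 1 - (b * d - a * c) * ξ₁^4 / (1 + (b + d) * ξ₁^2 + b * d * ξ₁^4) :=
        le_trans (div_nonneg (hN _ hx1.le) (hD _ hx1.le).le) (key (ξ₁^2) le_rfl)
      have hlt1 : 1 - (b * d - a * c) * ξ₁^4 / (1 + (b + d) * ξ₁^2 + b * d * ξ₁^4) < 1 := by
        have : 0 < (b * d - a * c) * ξ₁^4 / (1 + (b + d) * ξ₁^2 + b * d * ξ₁^4) :=
          div_pos (by positivity) hE
        linarith
      refine ⟨Real.sqrt (1 - (b * d - a * c) * ξ₁^4 / (1 + (b + d) * ξ₁^2 + b * d * ξ₁^4)), ?_, ?_⟩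
      · calc Real.sqrt (1 - (b * d - a * c) * ξ₁^4 / (1 + (b + d) * ξ₁^2 + b * d * ξ₁^4))
            < Real.sqrt 1 := Real.sqrt_lt_sqrt h0 hlt1
          _ = 1 := Real.sqrt_one
      · intro ξ hξ
        rw [hM]
        apply Real.sqrt_le_sqrt
        apply key
        calc ξ₁^2 ≤ |ξ|^2 := by
              apply pow_le_pow_left₀ hξ₁.le hξ
          _ = ξ^2 := sq_abs ξ
    · -- case b*d = 0 and a*c = 0
      have hE : 0 < 1 + (b + d) * ξ₁^2 := by
        have h3 : 0 ≤ (b + d) * ξ₁^2 := mul_nonneg (by linarith) hx1.le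
        linarith
      have key : ∀ x : ℝ, ξ₁^2 ≤ x →
          ((1 - a * x) * (1 - c * x)) / ((1 + b * x) * (1 + d * x)) ≤
            1 - (a + b + c + d) * ξ₁^2 / (1 + (b + d) * ξ₁^2) := by
        intro x hx
        have hx0 : 0 ≤ x := le_trans hx1.le hx
        have hrw : 1 - (a + b + c + d) * ξ₁^2 / (1 + (b + d) * ξ₁^2) =
            ((1 + (b + d) * ξ₁^2) - (a + b + c + d) * ξ₁^2) / (1 + (b + d) * ξ₁^2) := by
          field_simp
        have hNeq : (1 - a * x) * (1 - c * x) = 1 - (a + c) * x := by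
          linear_combination x ^ 2 * h2
        have hDeq : (1 + b * x) * (1 + d * x) = 1 + (b + d) * x := by
          linear_combination x ^ 2 * h1
        rw [hrw, div_le_div_iff₀ (hD x hx0) hE, hNeq, hDeq]
        have hxx : 0 ≤ x - ξ₁^2 := by linarith
        have t1 : 0 ≤ (a + b + c + d) * (x - ξ₁^2) := mul_nonneg hsum.le hxx
        nlinarith [t1]
      have h0 : 0 ≤ 1 - (a + b + c + d) * ξ₁^2 / (1 + (b + d) * ξ₁^2) :=
        le_trans (div_nonneg (hN _ hx1.le) (hD _ hx1.le).le) (key (ξ₁^2) le_rfl)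
      have hlt1 : 1 - (a + b + c + d) * ξ₁^2 / (1 + (b + d) * ξ₁^2) < 1 := by
        have : 0 < (a + b + c + d) * ξ₁^2 / (1 + (b + d) * ξ₁^2) :=
          div_pos (mul_pos hsum hx1) hE
        linarith
      refine ⟨Real.sqrt (1 - (a + b + c + d) * ξ₁^2 / (1 + (b + d) * ξ₁^2)), ?_, ?_⟩
      · calc Real.sqrt (1 - (a + b + c + d) * ξ₁^2 / (1 + (b + d) * ξ₁^2))
            < Real.sqrt 1 := Real.sqrt_lt_sqrt h0 hlt1
          _ = 1 := Real.sqrt_one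
      · intro ξ hξ
        rw [hM]
        apply Real.sqrt_le_sqrt
        apply key
        calc ξ₁^2 ≤ |ξ|^2 := by
              apply pow_le_pow_left₀ hξ₁.le hξ
          _ = ξ^2 := sq_abs ξ
end
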